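/- Let a ≠ 0, β₂ ∈ ℝ, λ > 0. If u : ℝ × ℝ → ℝ is a smooth positive solution of u_t = a u_{xxx}/u³ - 6a u_x u_{xx}/u⁴ + 6a u_x³/u⁵ + β₂ u u_x, then v(x,t) := λ u( λ² x , λ³ t ) is also a solution of the same equation. -/

import Mathlib

noncomputable def pX (u : ℝ → ℝ → ℝ) : ℝ → ℝ → ℝ := fun x t => deriv (fun y => u y t) x

noncomputable def pT (u : ℝ → ℝ → ℝ) : ℝ → ℝ → ℝ := fun x t => deriv (fun s => u x s) t

lemma hasDerivAt_slice_x (W : ℝ → ℝ → ℝ) (hW : ContDiff ℝ (⊤ : ℕ∞) (Function.uncurry W))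
    (x t : ℝ) :
    HasDerivAt (fun y => W y t) (fderiv ℝ (Function.uncurry W) (x, t) (1, 0)) x := by
  have h1 : HasFDerivAt (Function.uncurry W) (fderiv ℝ (Function.uncurry W) (x, t)) (x, t) :=
    (hW.differentiable (by simp) (x, t)).hasFDerivAt
  have h2 : HasDerivAt (fun y : ℝ => (y, t)) ((1 : ℝ), (0 : ℝ)) x :=
    (hasDerivAt_id x).prodMk (hasDerivAt_const x t)
  exact h1.comp_hasDerivAt x h2

lemma uncurry_pX_eq (W : ℝ → ℝ → ℝ) (hW : ContDiff ℝ (⊤ : ℕ∞) (Function.uncurry W)) :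
    Function.uncurry (pX W) = fun p => fderiv ℝ (Function.uncurry W) p (1, 0) := by
  funext p
  exact (hasDerivAt_slice_x W hW p.1 p.2).deriv

lemma pX_contDiff (W : ℝ → ℝ → ℝ) (hW : ContDiff ℝ (⊤ : ℕ∞) (Function.uncurry W)) :
    ContDiff ℝ (⊤ : ℕ∞) (Function.uncurry (pX W)) := by
  rw [uncurry_pX_eq W hW]
  exact (hW.fderiv_right (by simp)).clm_apply contDiff_const

lemma scale_contDiff (c b d : ℝ) (W : ℝ → ℝ → ℝ) (hW : ContDiff ℝ (⊤ : ℕ∞) (Function.uncurry W)) :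
    ContDiff ℝ (⊤ : ℕ∞) (Function.uncurry (fun x t => c * W (b * x) (d * t))) := by
  have : Function.uncurry (fun x t => c * W (b * x) (d * t))
      = fun p : ℝ × ℝ => c * Function.uncurry W (b * p.1, d * p.2) := rfl
  rw [this]
  exact contDiff_const.mul (hW.comp (ContDiff.prodMk (contDiff_const.mul contDiff_fst)
    (contDiff_const.mul contDiff_snd)))

lemma pX_scale (c b d : ℝ) (W : ℝ → ℝ → ℝ) (hW : ContDiff ℝ (⊤ : ℕ∞) (Function.uncurry W))
    (x t : ℝ) :
    pX (fun x t => c * W (b * x) (d * t)) x t = c * b * pX W (b * x) (d * t) := by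
  have h1 := hasDerivAt_slice_x W hW (b * x) (d * t)
  have h2 : HasDerivAt (fun y : ℝ => b * y) b x := by
    simpa using (hasDerivAt_id x).const_mul b
  have h3 : HasDerivAt (fun y => c * W (b * y) (d * t))
      (c * (fderiv ℝ (Function.uncurry W) (b * x, d * t) (1, 0) * b)) x :=
    (h1.comp x h2).const_mul c
  have hx : pX W (b * x) (d * t) = fderiv ℝ (Function.uncurry W) (b * x, d * t) (1, 0) :=
    h1.deriv
  rw [pX, h3.deriv, hx]; ring

lemma pT_scale (c b d : ℝ) (W : ℝ → ℝ → ℝ) (hW : ContDiff ℝ (⊤ : ℕ∞) (Function.uncurry W))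
    (x t : ℝ) :
    pT (fun x t => c * W (b * x) (d * t)) x t = c * d * pT W (b * x) (d * t) := by
  have hft : HasFDerivAt (Function.uncurry W)
      (fderiv ℝ (Function.uncurry W) (b * x, d * t)) (b * x, d * t) :=
    (hW.differentiable (by simp) _).hasFDerivAt
  have h2t : HasDerivAt (fun s : ℝ => ((b * x : ℝ), s)) ((0 : ℝ), (1 : ℝ)) (d * t) :=
    (hasDerivAt_const _ _).prodMk (hasDerivAt_id _)
  have h1 : HasDerivAt (fun s => W (b * x) s)
      (fderiv ℝ (Function.uncurry W) (b * x, d * t) (0, 1)) (d * t) :=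
    hft.comp_hasDerivAt _ h2t
  have h2 : HasDerivAt (fun s : ℝ => d * s) d t := by
    simpa using (hasDerivAt_id t).const_mul d
  have h3 : HasDerivAt (fun s => c * W (b * x) (d * s))
      (c * (fderiv ℝ (Function.uncurry W) (b * x, d * t) (0, 1) * d)) t :=
    (h1.comp t h2).const_mul c
  have hx : pT W (b * x) (d * t) = fderiv ℝ (Function.uncurry W) (b * x, d * t) (0, 1) :=
    h1.deriv
  rw [pT, h3.deriv, hx]; ring
theorem stmt12 (a β₂ L : ℝ) (ha : a ≠ 0) (hL : 0 < L)
    (u : ℝ → ℝ → ℝ) (hu : ContDiff ℝ (⊤ : ℕ∞) (Function.uncurry u))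
    (hpos : ∀ x t, 0 < u x t)
    (hpde : ∀ x t, pT u x t
      = a * pX (pX (pX u)) x t / (u x t) ^ 3
        - 6 * a * pX u x t * pX (pX u) x t / (u x t) ^ 4
        + 6 * a * (pX u x t) ^ 3 / (u x t) ^ 5 + β₂ * u x t * pX u x t)
    (v : ℝ → ℝ → ℝ)
    (hv : ∀ x t, v x t = L * u (L ^ 2 * x) (L ^ 3 * t)) :
    ∀ x t, pT v x t
      = a * pX (pX (pX v)) x t / (v x t) ^ 3
        - 6 * a * pX v x t * pX (pX v) x t / (v x t) ^ 4
        + 6 * a * (pX v x t) ^ 3 / (v x t) ^ 5 + β₂ * v x t * pX v x t := by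
  have hveq : v = fun x t => L * u (L ^ 2 * x) (L ^ 3 * t) :=
    funext fun x => funext fun t => hv x t
  subst hveq
  have hu1 := pX_contDiff u hu
  have hu2 := pX_contDiff _ hu1
  intro x t
  have hX : (L ^ 2 * x : ℝ) = L ^ 2 * x := rfl
  have hLne : L ≠ 0 := ne_of_gt hL
  have hune : u (L ^ 2 * x) (L ^ 3 * t) ≠ 0 := ne_of_gt (hpos (L ^ 2 * x) (L ^ 3 * t))
  -- first derivatives
  have e0 : pT (fun x t => L * u (L ^ 2 * x) (L ^ 3 * t)) x t = L * L ^ 3 * pT u (L ^ 2 * x) (L ^ 3 * t) :=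
    pT_scale L (L ^ 2) (L ^ 3) u hu x t
  have e1f : (pX fun x t => L * u (L ^ 2 * x) (L ^ 3 * t))
      = fun x t => (L * L ^ 2) * pX u (L ^ 2 * x) (L ^ 3 * t) :=
    funext fun x => funext fun t => pX_scale L (L ^ 2) (L ^ 3) u hu x t
  have e2f : (pX fun x t => (L * L ^ 2) * pX u (L ^ 2 * x) (L ^ 3 * t))
      = fun x t => (L * L ^ 2 * L ^ 2) * pX (pX u) (L ^ 2 * x) (L ^ 3 * t) :=
    funext fun x => funext fun t => pX_scale (L * L ^ 2) (L ^ 2) (L ^ 3) (pX u) hu1 x t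
  have e3 : pX (fun x t => (L * L ^ 2 * L ^ 2) * pX (pX u) (L ^ 2 * x) (L ^ 3 * t)) x t
      = (L * L ^ 2 * L ^ 2 * L ^ 2) * pX (pX (pX u)) (L ^ 2 * x) (L ^ 3 * t) := by
    rw [pX_scale (L * L ^ 2 * L ^ 2) (L ^ 2) (L ^ 3) (pX (pX u)) hu2 x t]
  rw [e0, e1f, e2f, e3, hpde (L ^ 2 * x) (L ^ 3 * t)]
  field_simp
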